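/- Fix the shared-seed coordinated sampling setup and a function f : V → ℝ_{≥0}. The J estimator is nonnegative (f̂^{(J)}(u,v) ≥ 0 for all u ∈ (0,1] and v ∈ V) and satisfies, for every ρ ∈ (0,1] and every v ∈ V, ∫_ρ^1 f̂^{(J)}(u,v) du ≤ f̲(ρ,v). -/

import Mathlib

open MeasureTheory Set Filter Topology

noncomputable section

/-- A shared-seed coordinated sampling scheme on a data domain `V ⊆ ℝ_{≥0}^r`:
continuous non-decreasing seed-to-threshold maps `τ i : [0,1] → ℝ` whose range
infimum is at most the infimum of the `i`-th coordinate over the domain. -/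
structure CoordScheme (r : ℕ) where
  V : Set (Fin r → ℝ)
  τ : Fin r → ℝ → ℝ
  V_nonneg : ∀ v ∈ V, ∀ i, 0 ≤ v i
  τ_cont : ∀ i, ContinuousOn (τ i) (Set.Icc 0 1)
  τ_mono : ∀ i, MonotoneOn (τ i) (Set.Icc 0 1)
  τ_inf : ∀ i, sInf (τ i '' Set.Icc 0 1) ≤ sInf ((fun v => v i) '' V)

namespace CoordScheme

variable {r : ℕ}

/-- The set `S(u,v)` of sampled entries: `i` is sampled iff `v i ≥ τ i u`. -/
def sampled (C : CoordScheme r) (u : ℝ) (v : Fin r → ℝ) : Set (Fin r) :=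
  {i | C.τ i u ≤ v i}

/-- The consistent set `V*(u,v)` of data vectors consistent with the outcome `S(u,v)`. -/
def Vstar (C : CoordScheme r) (u : ℝ) (v : Fin r → ℝ) : Set (Fin r → ℝ) :=
  {z ∈ C.V | ∀ i, (C.τ i u ≤ v i → z i = v i) ∧ (v i < C.τ i u → z i < C.τ i u)}

/-- The lower bound function `f̲(u,v) = inf { f z : z ∈ V*(u,v) }`. -/
def lb (C : CoordScheme r) (f : (Fin r → ℝ) → ℝ) (u : ℝ) (v : Fin r → ℝ) : ℝ :=
  sInf (f '' C.Vstar u v)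

/-- An estimator: an integrable function of the outcome (it takes equal values on
data vectors consistent with the same outcome). -/
structure IsEstimator (C : CoordScheme r) (fhat : ℝ → (Fin r → ℝ) → ℝ) : Prop where
  integrable : ∀ v ∈ C.V, IntegrableOn (fun u => fhat u v) (Set.Ioc (0:ℝ) 1)
  consistent : ∀ u ∈ Set.Ioc (0:ℝ) 1, ∀ v ∈ C.V, ∀ z ∈ C.Vstar u v, fhat u v = fhat u z

/-- A nonnegative estimator. -/
def Nonneg (C : CoordScheme r) (fhat : ℝ → (Fin r → ℝ) → ℝ) : Prop :=
  ∀ u ∈ Set.Ioc (0:ℝ) 1, ∀ v ∈ C.V, 0 ≤ fhat u v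

/-- An unbiased estimator of `f`. -/
def Unbiased (C : CoordScheme r) (f : (Fin r → ℝ) → ℝ)
    (fhat : ℝ → (Fin r → ℝ) → ℝ) : Prop :=
  ∀ v ∈ C.V, (∫ u in Set.Ioc (0:ℝ) 1, fhat u v) = f v

end CoordScheme

/-- Lower convex hull of `g` on `(0,1]`: the pointwise largest convex function
bounded above by `g` there. -/
def lowerHull (g : ℝ → ℝ) (u : ℝ) : ℝ :=
  sSup {y : ℝ | ∃ h : ℝ → ℝ, ConvexOn ℝ (Set.Ioc (0:ℝ) 1) h ∧
      (∀ x ∈ Set.Ioc (0:ℝ) 1, h x ≤ g x) ∧ y = h u}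

namespace CoordScheme

variable {r : ℕ}

/-- The `v`-optimal estimates: the negated derivative of the lower hull of the
lower-bound function `u ↦ f̲(u,v)`. -/
def optEst (C : CoordScheme r) (f : (Fin r → ℝ) → ℝ) (v : Fin r → ℝ) (u : ℝ) : ℝ :=
  -deriv (lowerHull (fun x => C.lb f x v)) u

/-- Cumulative integral `∫_{2^{-j}}^1` of the J estimator (by its defining recursion):
`Jint (j+1) = Jint j + (value on `(2^{-j-1},2^{-j}]`) ⬝ 2^{-j-1}`. -/
def Jint (C : CoordScheme r) (f : (Fin r → ℝ) → ℝ) (v : Fin r → ℝ) : ℕ → ℝ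
  | 0 => 0
  | (j+1) => Jint C f v j +
      ((2:ℝ) ^ (j+1) * (C.lb f ((2:ℝ) ^ (-(j:ℤ))) v - Jint C f v j)) * (2:ℝ) ^ (-(j:ℤ) - 1)

/-- The (constant) value of the J estimator on the dyadic interval `(2^{-j-1}, 2^{-j}]`.
For `j = 0` this is `2 ⬝ f̲(1,v)`; for `j ≥ 1` it is
`2^{j+1} ⬝ ( f̲(2^{-j},v) − ∫_{2^{-j}}^1 f̂⁽ᴶ⁾(x,v) dx )`. -/
def Jval (C : CoordScheme r) (f : (Fin r → ℝ) → ℝ) (v : Fin r → ℝ) (j : ℕ) : ℝ :=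
  (2:ℝ) ^ (j+1) * (C.lb f ((2:ℝ) ^ (-(j:ℤ))) v - Jint C f v j)

/-- The J estimator `f̂⁽ᴶ⁾(u,v)`: on `u ∈ (2^{-j-1}, 2^{-j}]` it takes the value `Jval j`. -/
def Jest (C : CoordScheme r) (f : (Fin r → ℝ) → ℝ) (u : ℝ) (v : Fin r → ℝ) : ℝ :=
  C.Jval f v ⌊-Real.logb 2 u⌋₊

end CoordScheme

/-!
The recursion is set up so that the integral of `f̂⁽ᴶ⁾(·,v)` over `(2^{-j-1}, 1]` is exactly
`f̲(2^{-j},v)`. Hence the value on `(2^{-j-1}, 2^{-j}]` is `2^{j+1}` times the increment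
`f̲(2^{-j},v) - f̲(2^{-j+1},v)` (for `j = 0`, of `f̲(1,v) ≥ 0`), which is nonnegative because
`u ↦ f̲(u,v)` is non-increasing: the consistent sets grow with `u`. For `ρ` in that interval, the integral over `(ρ, 1]`
is at most the one over `(2^{-j-1}, 1]`, that is `f̲(2^{-j},v) ≤ f̲(ρ,v)`.
-/

lemma two_zpow_neg_mem_Icc (j : ℕ) : (2:ℝ) ^ (-(j:ℤ)) ∈ Icc 0 1 :=
  ⟨by positivity, zpow_le_one_of_nonpos₀ one_le_two (by omega)⟩

lemma two_zpow_neg_sub_one (j : ℕ) : (2:ℝ) ^ (-(j:ℤ) - 1) = (2:ℝ) ^ (-(j:ℤ)) / 2 := by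
  rw [zpow_sub₀ two_ne_zero, zpow_one]

lemma floor_neg_logb_two_eq_iff {u : ℝ} (hu0 : 0 < u) (hu1 : u ≤ 1) (j : ℕ) :
    ⌊-Real.logb 2 u⌋₊ = j ↔ u ∈ Ioc ((2:ℝ) ^ (-(j:ℤ) - 1)) ((2:ℝ) ^ (-(j:ℤ))) := by
  have hlt (k : ℤ) : (2:ℝ) ^ k < u ↔ (k:ℝ) < Real.logb 2 u := by
    rw [Real.lt_logb_iff_rpow_lt one_lt_two hu0, Real.rpow_intCast]
  have hle (k : ℤ) : u ≤ (2:ℝ) ^ k ↔ Real.logb 2 u ≤ k := by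
    rw [Real.logb_le_iff_le_rpow one_lt_two hu0, Real.rpow_intCast]
  rw [Nat.floor_eq_iff (neg_nonneg.2 (Real.logb_nonpos one_lt_two hu0.le hu1)), mem_Ioc, hlt, hle]
  push_cast
  constructor <;> rintro ⟨h₁, h₂⟩ <;> constructor <;> linarith

namespace CoordScheme

variable {r : ℕ} (C : CoordScheme r) {f : (Fin r → ℝ) → ℝ} {v : Fin r → ℝ}

lemma Vstar_mono {u u' : ℝ} (hu' : 0 ≤ u') (huu' : u' ≤ u) (hu : u ≤ 1) :
    C.Vstar u' v ⊆ C.Vstar u v := by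
  have hτ (i : Fin r) : C.τ i u' ≤ C.τ i u :=
    C.τ_mono i ⟨hu', huu'.trans hu⟩ ⟨hu'.trans huu', hu⟩ huu'
  rintro z ⟨hzV, hz⟩
  refine ⟨hzV, fun i => ⟨fun hle => (hz i).1 ((hτ i).trans hle), fun hlt => ?_⟩⟩
  rcases lt_or_ge (v i) (C.τ i u') with h | h
  · exact ((hz i).2 h).trans_le (hτ i)
  · rwa [(hz i).1 h]

lemma lb_nonneg (hf : ∀ v ∈ C.V, 0 ≤ f v) (u : ℝ) (v : Fin r → ℝ) : 0 ≤ C.lb f u v :=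
  Real.sInf_nonneg <| by
    rintro _ ⟨z, hz, rfl⟩
    exact hf z hz.1

lemma lb_antitoneOn (hf : ∀ v ∈ C.V, 0 ≤ f v) (hv : v ∈ C.V) :
    AntitoneOn (fun u => C.lb f u v) (Icc 0 1) := by
  intro u' hu' u hu huu'
  refine csInf_le_csInf ⟨0, ?_⟩ ⟨f v, v, ⟨hv, fun _ => ⟨fun _ => rfl, id⟩⟩, rfl⟩
    (image_mono (C.Vstar_mono hu'.1 huu' hu.2))
  rintro _ ⟨z, hz, rfl⟩
  exact hf z hz.1

lemma Jint_succ (j : ℕ) :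
    C.Jint f v (j + 1) = C.Jint f v j + C.Jval f v j * (2:ℝ) ^ (-(j:ℤ) - 1) :=
  rfl

lemma Jint_succ_eq_lb (j : ℕ) : C.Jint f v (j + 1) = C.lb f ((2:ℝ) ^ (-(j:ℤ))) v := by
  rw [Jint_succ, Jval, two_zpow_neg_sub_one, zpow_neg, zpow_natCast, pow_succ]
  field_simp
  ring

lemma Jval_nonneg (hf : ∀ v ∈ C.V, 0 ≤ f v) (hv : v ∈ C.V) (j : ℕ) : 0 ≤ C.Jval f v j := by
  refine mul_nonneg (by positivity) (sub_nonneg.2 ?_)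
  cases j with
  | zero => simpa [Jint] using C.lb_nonneg hf 1 v
  | succ j =>
    rw [Jint_succ_eq_lb]
    exact C.lb_antitoneOn hf hv (two_zpow_neg_mem_Icc _) (two_zpow_neg_mem_Icc _)
      (zpow_le_zpow_right₀ one_le_two (by omega))

lemma Jest_eqOn_dyadic (j : ℕ) :
    EqOn (fun u => C.Jest f u v) (fun _ => C.Jval f v j)
      (Ioc ((2:ℝ) ^ (-(j:ℤ) - 1)) ((2:ℝ) ^ (-(j:ℤ)))) := fun u hu => by
  have hu0 : 0 < u := lt_trans (by positivity) hu.1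
  simp only [Jest, (floor_neg_logb_two_eq_iff hu0 (hu.2.trans (two_zpow_neg_mem_Icc j).2) j).2 hu]

/-- On `(ρ, 1]` the estimator takes only the finitely many values `Jval k` with `2^{-k} ≥ ρ`. -/
lemma integrableOn_Jest {ρ : ℝ} (hρ : 0 < ρ) :
    IntegrableOn (fun u => C.Jest f u v) (Ioc ρ 1) := by
  set N := ⌊-Real.logb 2 ρ⌋₊
  have hmeas : Measurable (fun u => C.Jest f u v) :=
    measurable_from_nat.comp (Nat.measurable_floor.comp (by unfold Real.logb; fun_prop))
  refine Measure.integrableOn_of_bounded (M := ∑ k ∈ Finset.range (N + 1), |C.Jval f v k|)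
    measure_Ioc_lt_top.ne hmeas.aestronglyMeasurable ?_
  filter_upwards [ae_restrict_mem measurableSet_Ioc] with u hu
  have hk : ⌊-Real.logb 2 u⌋₊ < N + 1 := Nat.lt_succ_of_le <| Nat.floor_le_floor <|
    neg_le_neg (Real.logb_le_logb_of_le one_lt_two hρ hu.1.le)
  exact Finset.single_le_sum (f := fun k => |C.Jval f v k|) (fun _ _ => abs_nonneg _)
    (Finset.mem_range.2 hk)

lemma setIntegral_Jest_Ioc_of_mem {j : ℕ} {ρ : ℝ}
    (hρ : ρ ∈ Icc ((2:ℝ) ^ (-(j:ℤ) - 1)) ((2:ℝ) ^ (-(j:ℤ)))) :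
    ∫ u in Ioc ρ 1, C.Jest f u v =
      (∫ u in Ioc ((2:ℝ) ^ (-(j:ℤ))) 1, C.Jest f u v) + ((2:ℝ) ^ (-(j:ℤ)) - ρ) * C.Jval f v j := by
  have hρ0 : 0 < ρ := lt_of_lt_of_le (by positivity) hρ.1
  rw [← Ioc_union_Ioc_eq_Ioc hρ.2 (two_zpow_neg_mem_Icc j).2,
    setIntegral_union (Ioc_disjoint_Ioc_of_le le_rfl) measurableSet_Ioc
      ((C.integrableOn_Jest hρ0).mono_set (Ioc_subset_Ioc_right (two_zpow_neg_mem_Icc j).2))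
      (C.integrableOn_Jest (by positivity)),
    setIntegral_congr_fun measurableSet_Ioc ((C.Jest_eqOn_dyadic j).mono (Ioc_subset_Ioc_left hρ.1)),
    setIntegral_const, Real.volume_real_Ioc_of_le hρ.2, smul_eq_mul, add_comm]

lemma setIntegral_Jest_dyadic (j : ℕ) :
    ∫ u in Ioc ((2:ℝ) ^ (-(j:ℤ))) 1, C.Jest f u v = C.Jint f v j := by
  induction j with
  | zero => simp [Jint]
  | succ j ih =>
    have hpow : (2:ℝ) ^ (-((j + 1 : ℕ) : ℤ)) = (2:ℝ) ^ (-(j:ℤ) - 1) := by push_cast; ring_nf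
    have hmem : (2:ℝ) ^ (-(j:ℤ) - 1) ∈ Icc ((2:ℝ) ^ (-(j:ℤ) - 1)) ((2:ℝ) ^ (-(j:ℤ))) :=
      ⟨le_rfl, zpow_le_zpow_right₀ one_le_two (by omega)⟩
    rw [hpow, C.setIntegral_Jest_Ioc_of_mem hmem, ih, Jint_succ, two_zpow_neg_sub_one]
    ring

end CoordScheme

/-- the J estimator is nonnegative and satisfies
`∫_ρ^1 f̂⁽ᴶ⁾(u,v) du ≤ f̲(ρ,v)` for every `ρ ∈ (0,1]` and `v ∈ V`. -/
theorem stmt11 {r : ℕ} (C : CoordScheme r) (f : (Fin r → ℝ) → ℝ)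
    (hf : ∀ v ∈ C.V, 0 ≤ f v) :
    (∀ u ∈ Set.Ioc (0:ℝ) 1, ∀ v ∈ C.V, 0 ≤ C.Jest f u v) ∧
    (∀ ρ ∈ Set.Ioc (0:ℝ) 1, ∀ v ∈ C.V,
      (∫ u in Set.Ioc ρ 1, C.Jest f u v) ≤ C.lb f ρ v) := by
  refine ⟨fun u _ v hv => C.Jval_nonneg hf hv _, fun ρ hρ v hv => ?_⟩
  set j := ⌊-Real.logb 2 ρ⌋₊
  have hρj := (floor_neg_logb_two_eq_iff hρ.1 hρ.2 j).1 rfl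
  have hJ := C.Jval_nonneg hf hv j
  calc ∫ u in Ioc ρ 1, C.Jest f u v
      = C.Jint f v j + ((2:ℝ) ^ (-(j:ℤ)) - ρ) * C.Jval f v j := by
        rw [C.setIntegral_Jest_Ioc_of_mem (Ioc_subset_Icc_self hρj), C.setIntegral_Jest_dyadic]
    _ ≤ C.Jint f v j + C.Jval f v j * (2:ℝ) ^ (-(j:ℤ) - 1) := by
        rw [two_zpow_neg_sub_one] at hρj ⊢
        nlinarith [hρj.1]
    _ = C.lb f ((2:ℝ) ^ (-(j:ℤ))) v := by rw [← C.Jint_succ, C.Jint_succ_eq_lb]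
    _ ≤ C.lb f ρ v := C.lb_antitoneOn hf hv ⟨hρ.1.le, hρ.2⟩ (two_zpow_neg_mem_Icc j) hρj.2
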